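/- arXiv:0905.4193 — 10 statements merged into one kernel-verified Lean document; each statement's English description precedes it below -/
import Mathlib

section
/- The family O of observable regular languages is closed under Kleene plus: if L is observable then L⁺ is observable. -/
open Computability

/-- A state `q` of a DFA is *observable* if some word leads from it to an accepting state. -/
def ObsState {α σ : Type} (M : DFA α σ) (q : σ) : Prop :=
  ∃ w : List α, M.evalFrom q w ∈ M.accept

/-- A state is *semi-observable* if it is observable and some single input symbol
leads from it to a non-observable state. -/
def SemiObsState {α σ : Type} (M : DFA α σ) (q : σ) : Prop :=
  ObsState M q ∧ ∃ a : α, ¬ ObsState M (M.step q a)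

/-- All states of the DFA are accessible from the start state. -/
def Accessible {α σ : Type} (M : DFA α σ) : Prop :=
  ∀ q : σ, ∃ w : List α, M.eval w = q

/-- `L` is accepted by some (completely specified, accessible) DFA all of whose
states are observable.  This is membership in the family `O` over the alphabet `α`. -/
def AcceptsObservably (α : Type) (L : Language α) : Prop :=
  ∃ (σ : Type) (_ : Fintype σ) (M : DFA α σ),
    Accessible M ∧ (∀ q : σ, ObsState M q) ∧ M.accepts = L

/-- Membership in the family `T_k`: `L` is accepted by some accessible DFA with at
most `k` semi-observable states. -/
def InT (α : Type) (k : ℕ) (L : Language α) : Prop :=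
  ∃ (σ : Type) (_ : Fintype σ) (M : DFA α σ),
    Accessible M ∧ M.accepts = L ∧ {q : σ | SemiObsState M q}.ncard ≤ k

/-- The alphabet (the whole type `α`) is minimal for `L`: every letter occurs in some word of `L`. -/
def MinimalAlphabet {α : Type} (L : Language α) : Prop :=
  ∀ a : α, ∃ w ∈ L, a ∈ w

/-! If `M` accepts `L` with all states observable, run the subset construction on the NFA that
follows `M` and may jump back to the start state whenever it enters an accepting state; it
accepts `L∗ L = L⁺`. The set reached by a word `w` always contains `M.eval w`, so it inherits
that state's observability, and restricting to the reachable subsets gives an accessible DFA. -/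

namespace DFA

variable {α τ σ : Type}

def restrictReachable (N : DFA α τ) : DFA α (Set.range N.eval) where
  step s a := ⟨N.step s a, by
    obtain ⟨w, hw⟩ := s.2
    exact ⟨w ++ [a], by rw [eval_append_singleton, hw]⟩⟩
  start := ⟨N.start, [], rfl⟩
  accept := Subtype.val ⁻¹' N.accept

theorem restrictReachable_evalFrom_val (N : DFA α τ) (s : Set.range N.eval) (w : List α) :
    (N.restrictReachable.evalFrom s w).val = N.evalFrom s w := by
  induction w generalizing s with
  | nil => rfl
  | cons a w ih => exact ih _

theorem mem_restrictReachable_accept (N : DFA α τ) (s : Set.range N.eval) :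
    s ∈ N.restrictReachable.accept ↔ s.val ∈ N.accept :=
  Iff.rfl

theorem accessible_restrictReachable (N : DFA α τ) : Accessible N.restrictReachable := by
  rintro ⟨_, w, rfl⟩
  exact ⟨w, Subtype.ext (N.restrictReachable_evalFrom_val _ w)⟩

theorem restrictReachable_accepts (N : DFA α τ) : N.restrictReachable.accepts = N.accepts := by
  ext w
  exact Eq.to_iff (congrArg (· ∈ N.accept) (N.restrictReachable_evalFrom_val _ w))

theorem acceptsObservably_accepts_of_obsState_eval [Finite τ] (N : DFA α τ)
    (hN : ∀ w, ObsState N (N.eval w)) : AcceptsObservably α N.accepts := by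
  refine ⟨_, Fintype.ofFinite _, N.restrictReachable, N.accessible_restrictReachable,
    ?_, N.restrictReachable_accepts⟩
  rintro ⟨_, w, rfl⟩
  obtain ⟨v, hv⟩ := hN w
  exact ⟨v, by rwa [mem_restrictReachable_accept, restrictReachable_evalFrom_val]⟩

/-- The NFA for `L∗ * L`, with `L = M.accepts`: it runs `M`, and on entering an accepting state
may also restart at the start state. -/
def plusNFA (M : DFA α σ) : NFA α σ where
  step q a := {p | p = M.step q a ∨ (p = M.start ∧ M.step q a ∈ M.accept)}
  start := {M.start}
  accept := M.accept

variable (M : DFA α σ)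

theorem evalFrom_mem_plusNFA_evalFrom {q : σ} {S : Set σ} (hq : q ∈ S) (v : List α) :
    M.evalFrom q v ∈ M.plusNFA.evalFrom S v := by
  induction v generalizing q S with
  | nil => exact hq
  | cons a v ih => exact ih (NFA.mem_stepSet.2 ⟨q, hq, Or.inl rfl⟩)

theorem start_mem_plusNFA_evalFrom_of_mem_accepts {S : Set σ} (hS : M.start ∈ S) {x : List α}
    (hx : x ∈ M.accepts) : M.start ∈ M.plusNFA.evalFrom S x := by
  rcases List.eq_nil_or_concat x with rfl | ⟨y, a, rfl⟩
  · exact hS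
  rw [List.concat_eq_append, mem_accepts, eval, evalFrom_append_singleton] at hx
  rw [List.concat_eq_append, NFA.evalFrom_append, NFA.evalFrom_singleton]
  exact NFA.mem_stepSet.2 ⟨_, M.evalFrom_mem_plusNFA_evalFrom hS y, Or.inr ⟨rfl, hx⟩⟩

theorem start_mem_plusNFA_evalFrom_of_mem_kstar {S : Set σ} (hS : M.start ∈ S) {u : List α}
    (hu : u ∈ M.accepts∗) : M.start ∈ M.plusNFA.evalFrom S u := by
  rw [Language.mem_kstar] at hu
  obtain ⟨xs, rfl, hxs⟩ := hu
  induction xs generalizing S with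
  | nil => exact hS
  | cons x xs ih =>
    rw [List.flatten_cons, NFA.evalFrom_append]
    exact ih (M.start_mem_plusNFA_evalFrom_of_mem_accepts hS (hxs x List.mem_cons_self))
      fun y hy => hxs y (List.mem_cons_of_mem _ hy)

theorem mem_plusNFA_eval_iff {q : σ} {w : List α} :
    q ∈ M.plusNFA.eval w ↔ ∃ u ∈ M.accepts∗, ∃ v, M.eval v = q ∧ u ++ v = w := by
  constructor
  · induction w using List.reverseRecOn generalizing q with
    | nil =>
      rintro rfl
      exact ⟨[], Language.nil_mem_kstar _, [], rfl, rfl⟩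
    | append_singleton y a ih =>
      rw [NFA.eval_append_singleton, NFA.mem_stepSet]
      rintro ⟨_, hp, hq⟩
      obtain ⟨u, hu, v, rfl, rfl⟩ := ih hp
      rcases hq with rfl | ⟨rfl, hacc⟩
      · exact ⟨u, hu, v ++ [a], eval_append_singleton _ _ _, by simp⟩
      · have hva : v ++ [a] ∈ M.accepts := by rwa [mem_accepts, eval_append_singleton]
        have hu' : u ++ (v ++ [a]) ∈ M.accepts∗ :=
          kstar_mul_le_kstar (α := Language α) (Language.append_mem_mul hu hva)
        exact ⟨u ++ (v ++ [a]), hu', [], rfl, by simp⟩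
  · rintro ⟨u, hu, v, rfl, rfl⟩
    rw [NFA.eval, NFA.evalFrom_append]
    exact M.evalFrom_mem_plusNFA_evalFrom
      (M.start_mem_plusNFA_evalFrom_of_mem_kstar (Set.mem_singleton _) hu) v

theorem plusNFA_accepts : M.plusNFA.accepts = M.accepts∗ * M.accepts := by
  ext w
  simp only [NFA.accepts, mem_plusNFA_eval_iff, Language.mem_mul, mem_accepts]
  constructor
  · rintro ⟨_, hq, u, hu, v, rfl, rfl⟩
    exact ⟨u, hu, v, hq, rfl⟩
  · rintro ⟨u, hu, v, hv, rfl⟩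
    exact ⟨_, hv, u, hu, v, rfl, rfl⟩

theorem obsState_plusNFA_toDFA_eval (hM : ∀ q, ObsState M q) (w : List α) :
    ObsState M.plusNFA.toDFA (M.plusNFA.toDFA.eval w) := by
  have hw : M.eval w ∈ M.plusNFA.eval w :=
    M.evalFrom_mem_plusNFA_evalFrom (Set.mem_singleton _) w
  obtain ⟨v, hv⟩ := hM (M.eval w)
  exact ⟨v, _, M.evalFrom_mem_plusNFA_evalFrom hw v, hv⟩

end DFA

theorem observable_closed_kleene_plus_general {α : Type} (L : Language α)
    (hobs : AcceptsObservably α L) : AcceptsObservably α (L * L∗) := by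
  obtain ⟨σ, _, M, -, hM, rfl⟩ := hobs
  rw [← Language.mul_self_kstar_comm, ← M.plusNFA_accepts, ← NFA.toDFA_correct]
  exact M.plusNFA.toDFA.acceptsObservably_accepts_of_obsState_eval
    (M.obsState_plusNFA_toDFA_eval hM)

/-- The family `O` of observable regular languages is closed under Kleene plus. -/
theorem observable_closed_kleene_plus {α : Type} [Fintype α] (L : Language α)
    (hobs : AcceptsObservably α L) : AcceptsObservably α (L * L∗) :=
  observable_closed_kleene_plus_general L hobs
end

section
/- The family O of observable regular languages is not closed under union: there exist observable regular languages L₁, L₂ such that L₁ ∪ L₂ is not observable. -/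
open Computability

/-- The minimal alphabet of `L`: the letters occurring in some word of `L`. -/
def minAlph {α : Type} (L : Language α) : Set α := {a : α | ∃ w ∈ L, a ∈ w}

/-- `L` viewed as a language over its minimal alphabet. -/
def restrictToMin {α : Type} (L : Language α) : Language (minAlph L) :=
  {w : List (minAlph L) | w.map Subtype.val ∈ L}

/-- `L` belongs to the family `O`: it is observable with respect to its minimal alphabet. -/
def InO {α : Type} (L : Language α) : Prop :=
  AcceptsObservably (minAlph L) (restrictToMin L)

/-!
In a DFA whose states are all observable, every word leads to a state from which an
accepting state is reachable, so every word is a prefix of an accepted word.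
The languages `a*` and `b*` are universal over their minimal alphabets, hence observable,
while no word of `a* ∪ b*` extends `ab`.
-/

def constLang {α : Type} (a : α) : Language α := {w | ∀ x ∈ w, x = a}

lemma acceptsObservably_top (α : Type) : AcceptsObservably α ⊤ :=
  ⟨Unit, inferInstance, ⟨fun _ _ => (), (), Set.univ⟩, fun _ => ⟨[], rfl⟩,
    fun _ => ⟨[], trivial⟩, Set.eq_univ_of_forall fun _ => trivial⟩

lemma restrictToMin_constLang {α : Type} (a : α) : restrictToMin (constLang a) = ⊤ := by
  refine Set.eq_univ_of_forall fun w x hx => ?_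
  obtain ⟨y, -, rfl⟩ := List.mem_map.1 hx
  obtain ⟨v, hv, hyv⟩ := y.2
  exact hv _ hyv

lemma inO_constLang {α : Type} (a : α) : InO (constLang a) := by
  unfold InO
  rw [restrictToMin_constLang]
  exact acceptsObservably_top _

lemma AcceptsObservably.exists_append_mem {α : Type} {L : Language α}
    (h : AcceptsObservably α L) (u : List α) : ∃ w, u ++ w ∈ L := by
  obtain ⟨σ, _, M, -, hobs, rfl⟩ := h
  obtain ⟨w, hw⟩ := hobs (M.eval u)
  exact ⟨w, by rwa [DFA.mem_accepts, DFA.eval, DFA.evalFrom_of_append]⟩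

lemma not_inO_constLang_add {α : Type} {a b : α} (hab : a ≠ b) :
    ¬ InO (constLang a + constLang b) := by
  have ha : a ∈ minAlph (constLang a + constLang b) :=
    ⟨[a], Or.inl (by simp [constLang]), by simp⟩
  have hb : b ∈ minAlph (constLang a + constLang b) :=
    ⟨[b], Or.inr (by simp [constLang]), by simp⟩
  intro hO
  obtain ⟨w, hw⟩ := hO.exists_append_mem [⟨a, ha⟩, ⟨b, hb⟩]
  rcases hw with hw | hw
  · exact hab (hw b (by simp)).symm
  · exact hab (hw a (by simp))

/-- `O` is not closed under union (`+` on `Language` is union). -/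
theorem O_not_closed_union :
    ∃ (α : Type) (_ : Fintype α) (L₁ L₂ : Language α),
      InO L₁ ∧ InO L₂ ∧ ¬ InO (L₁ + L₂) :=
  ⟨Bool, inferInstance, constLang false, constLang true, inO_constLang false,
    inO_constLang true, not_inO_constLang_add Bool.false_ne_true⟩
end

section
/- For every alphabet Σ with at least two symbols, the family O(Σ) of observable regular languages with minimal alphabet Σ is closed under union. -/
open Computability

namespace DFA

variable {α σ : Type} (M : DFA α σ)

theorem obsState_iff_acceptsFrom_nonempty (q : σ) :
    ObsState M q ↔ (M.acceptsFrom q).Nonempty :=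
  Iff.rfl

def reachablePart : DFA α (Set.range M.eval) where
  step q a := ⟨M.step q a, by
    obtain ⟨w, hw⟩ := q.property
    exact ⟨w ++ [a], by rw [eval_append_singleton, hw]⟩⟩
  start := ⟨M.start, [], rfl⟩
  accept := Subtype.val ⁻¹' M.accept

@[simp]
theorem val_evalFrom_reachablePart (q : Set.range M.eval) (w : List α) :
    (M.reachablePart.evalFrom q w : σ) = M.evalFrom q w := by
  induction w generalizing q with
  | nil => rfl
  | cons a w ih => exact ih _

theorem acceptsFrom_reachablePart (q : Set.range M.eval) :
    M.reachablePart.acceptsFrom q = M.acceptsFrom q := by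
  ext w
  change (M.reachablePart.evalFrom q w : σ) ∈ M.accept ↔ M.evalFrom q w ∈ M.accept
  rw [val_evalFrom_reachablePart]

theorem accepts_reachablePart : M.reachablePart.accepts = M.accepts :=
  M.acceptsFrom_reachablePart M.reachablePart.start

theorem accessible_reachablePart : Accessible M.reachablePart := by
  rintro ⟨q, w, rfl⟩
  exact ⟨w, Subtype.ext (M.val_evalFrom_reachablePart _ w)⟩

theorem obsState_reachablePart_iff (q : Set.range M.eval) :
    ObsState M.reachablePart q ↔ ObsState M q := by
  rw [obsState_iff_acceptsFrom_nonempty, obsState_iff_acceptsFrom_nonempty,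
    acceptsFrom_reachablePart]

theorem obsState_union_of_left {σ' : Type} (M' : DFA α σ') {q : σ} (hq : ObsState M q)
    (q' : σ') : ObsState (M.union M') (q, q') := by
  rw [obsState_iff_acceptsFrom_nonempty, acceptsFrom_union] at *
  exact hq.mono fun _ hw => Or.inl hw

end DFA

section

variable {α : Type}

/-- Accessibility costs nothing: restricting to the reachable part keeps every state observable. -/
theorem acceptsObservably_of_forall_obsState {σ : Type} [Finite σ] (M : DFA α σ)
    (hM : ∀ q, ObsState M q) : AcceptsObservably α M.accepts :=
  ⟨_, Fintype.ofFinite _, M.reachablePart, M.accessible_reachablePart,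
    fun q => (M.obsState_reachablePart_iff q).2 (hM q), M.accepts_reachablePart⟩

theorem AcceptsObservably.isRegular {L : Language α} (h : AcceptsObservably α L) :
    L.IsRegular :=
  let ⟨σ, _, M, _, _, hM⟩ := h
  ⟨σ, inferInstance, M, hM⟩

/-- In the product automaton every state is observable through its first component. -/
theorem AcceptsObservably.add_isRegular {L₁ L₂ : Language α} (h₁ : AcceptsObservably α L₁)
    (h₂ : L₂.IsRegular) : AcceptsObservably α (L₁ + L₂) := by
  obtain ⟨σ₁, _, M₁, -, hobs₁, rfl⟩ := h₁
  obtain ⟨σ₂, _, M₂, rfl⟩ := h₂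
  rw [← DFA.accepts_union]
  exact acceptsObservably_of_forall_obsState _ fun q =>
    M₁.obsState_union_of_left M₂ (hobs₁ q.1) q.2

theorem MinimalAlphabet.mono {L L' : Language α} (h : MinimalAlphabet L) (hLL' : L ≤ L') :
    MinimalAlphabet L' := fun a =>
  let ⟨w, hw, ha⟩ := h a
  ⟨w, hLL' hw, ha⟩

end

theorem OSigma_closed_union_general {α : Type}
    (L₁ L₂ : Language α)
    (h₁ : AcceptsObservably α L₁ ∧ MinimalAlphabet L₁)
    (h₂ : AcceptsObservably α L₂ ∧ MinimalAlphabet L₂) :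
    AcceptsObservably α (L₁ + L₂) ∧ MinimalAlphabet (L₁ + L₂) :=
  ⟨h₁.1.add_isRegular h₂.1.isRegular, h₁.2.mono le_self_add⟩

/-- For an alphabet with at least two symbols, `O(Σ)` is closed under union
(`+` on `Language` is union). -/
theorem OSigma_closed_union {α : Type} [Fintype α] (hcard : 2 ≤ Fintype.card α)
    (L₁ L₂ : Language α)
    (h₁ : AcceptsObservably α L₁ ∧ MinimalAlphabet L₁)
    (h₂ : AcceptsObservably α L₂ ∧ MinimalAlphabet L₂) :
    AcceptsObservably α (L₁ + L₂) ∧ MinimalAlphabet (L₁ + L₂) :=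
  OSigma_closed_union_general L₁ L₂ h₁ h₂
end

section
/- For every alphabet Σ with at least two symbols, the family O(Σ) is closed under concatenation: if L₁, L₂ ∈ O(Σ) then L₁·L₂ ∈ O(Σ). -/
/-! An accessible DFA has only observable states exactly when every word extends to a word of
its language, so `O(Σ)` consists of the regular languages with minimal alphabet `Σ` in which
every word is a prefix of a member. Each of these properties passes from `L₁` to `L₁ * L₂`
as soon as `L₂` is nonempty; regularity of the product comes from Myhill–Nerode. -/

namespace Language

variable {α : Type*}

theorem mem_leftQuotient_mul_iff {l m : Language α} {w y : List α} :
    y ∈ (l * m).leftQuotient w ↔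
      y ∈ l.leftQuotient w * m ∨ ∃ v, (∃ u ∈ l, u ++ v = w) ∧ y ∈ m.leftQuotient v := by
  simp only [mem_leftQuotient, mem_mul]
  constructor
  · rintro ⟨a, ha, b, hb, hab⟩
    rcases List.append_eq_append_iff.mp hab with ⟨c, rfl, rfl⟩ | ⟨c, rfl, rfl⟩
    · exact .inr ⟨c, ⟨a, ha, rfl⟩, hb⟩
    · exact .inl ⟨c, ha, b, hb, rfl⟩
  · rintro (⟨c, hc, b, hb, rfl⟩ | ⟨v, ⟨u, hu, rfl⟩, hv⟩)
    · exact ⟨w ++ c, hc, b, hb, List.append_assoc ..⟩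
    · exact ⟨u, hu, v ++ y, hv, (List.append_assoc ..).symm⟩

theorem IsRegular.mul {l m : Language α} (hl : l.IsRegular) (hm : m.IsRegular) :
    (l * m).IsRegular := by
  rw [isRegular_iff_finite_range_leftQuotient] at *
  -- `(l * m).leftQuotient w` is determined by `l.leftQuotient w` and the set of quotients
  -- `m.leftQuotient v` over the splittings `w = u ++ v` with `u ∈ l`.
  let combine (p : Language α × Set (Language α)) : Language α :=
    {y | y ∈ p.1 * m ∨ ∃ q ∈ p.2, y ∈ q}
  refine ((hl.prod hm.finite_subsets).image combine).subset ?_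
  rintro _ ⟨w, rfl⟩
  refine ⟨(l.leftQuotient w, m.leftQuotient '' {v | ∃ u ∈ l, u ++ v = w}),
    ⟨⟨w, rfl⟩, Set.image_subset_range _ _⟩, ?_⟩
  ext y
  rw [mem_leftQuotient_mul_iff]
  simp only [combine, Set.mem_image, exists_exists_and_eq_and]
  exact Iff.rfl

theorem toDFA_evalFrom (L : Language α) (s : Set.range L.leftQuotient) (x : List α) :
    (L.toDFA.evalFrom s x).val = s.val.leftQuotient x := by
  induction x generalizing s with
  | nil => rfl
  | cons a x ih => simp [ih, ← leftQuotient_append]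

theorem toDFA_eval (L : Language α) (x : List α) :
    L.toDFA.eval x = ⟨L.leftQuotient x, x, rfl⟩ :=
  Subtype.ext (toDFA_evalFrom L _ x)

def IsPrefixDense (L : Language α) : Prop :=
  ∀ w, ∃ u, w ++ u ∈ L

theorem IsPrefixDense.nonempty {L : Language α} (h : L.IsPrefixDense) : L.Nonempty :=
  let ⟨u, hu⟩ := h []
  ⟨u, hu⟩

theorem IsPrefixDense.mul {l m : Language α} (hl : l.IsPrefixDense) (hm : m.Nonempty) :
    (l * m).IsPrefixDense := fun w =>
  let ⟨u, hu⟩ := hl w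
  let ⟨v, hv⟩ := hm
  ⟨u ++ v, by simpa using append_mem_mul hu hv⟩

end Language

theorem MinimalAlphabet.mul {α : Type} {l m : Language α} (hl : MinimalAlphabet l)
    (hm : m.Nonempty) : MinimalAlphabet (l * m) := fun a =>
  let ⟨w, hw, ha⟩ := hl a
  let ⟨v, hv⟩ := hm
  ⟨w ++ v, Language.append_mem_mul hw hv, List.mem_append_left v ha⟩

theorem acceptsObservably_iff {α : Type} {L : Language α} :
    AcceptsObservably α L ↔ L.IsRegular ∧ L.IsPrefixDense := by
  constructor
  · rintro ⟨σ, _, M, -, hobs, rfl⟩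
    refine ⟨⟨σ, ‹_›, M, rfl⟩, fun w => ?_⟩
    obtain ⟨u, hu⟩ := hobs (M.eval w)
    exact ⟨u, by rwa [DFA.mem_accepts, DFA.eval, DFA.evalFrom_of_append]⟩
  · rintro ⟨hreg, hdense⟩
    have := (Language.isRegular_iff_finite_range_leftQuotient.mp hreg).fintype
    refine ⟨_, this, L.toDFA, fun ⟨_, w, rfl⟩ => ⟨w, L.toDFA_eval w⟩, ?_, L.accepts_toDFA⟩
    rintro ⟨_, w, rfl⟩
    obtain ⟨u, hu⟩ := hdense w
    exact ⟨u, by simpa [Language.toDFA_evalFrom] using hu⟩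

theorem OSigma_closed_concat_general {α : Type}
    (L₁ L₂ : Language α)
    (h₁ : AcceptsObservably α L₁ ∧ MinimalAlphabet L₁)
    (h₂ : AcceptsObservably α L₂ ∧ MinimalAlphabet L₂) :
    AcceptsObservably α (L₁ * L₂) ∧ MinimalAlphabet (L₁ * L₂) := by
  obtain ⟨hreg₁, hdense₁⟩ := acceptsObservably_iff.mp h₁.1
  obtain ⟨hreg₂, hdense₂⟩ := acceptsObservably_iff.mp h₂.1
  exact ⟨acceptsObservably_iff.mpr ⟨hreg₁.mul hreg₂, hdense₁.mul hdense₂.nonempty⟩,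
    h₁.2.mul hdense₂.nonempty⟩

/-- For an alphabet with at least two symbols, `O(Σ)` is closed under concatenation. -/
theorem OSigma_closed_concat {α : Type} [Fintype α] (hcard : 2 ≤ Fintype.card α)
    (L₁ L₂ : Language α)
    (h₁ : AcceptsObservably α L₁ ∧ MinimalAlphabet L₁)
    (h₂ : AcceptsObservably α L₂ ∧ MinimalAlphabet L₂) :
    AcceptsObservably α (L₁ * L₂) ∧ MinimalAlphabet (L₁ * L₂) :=
  OSigma_closed_concat_general L₁ L₂ h₁ h₂
end

section
/- T₀ = O ∪ {∅}: a regular language is accepted by some DFA with zero semi-observable states if and only if it is observable or empty. -/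
/-! A DFA without semi-observable states never moves from an observable state to a
non-observable one, so observability of the start state propagates to every accessible
state. Hence such a DFA is either observable or has a non-observable start state, i.e. it
accepts `∅`. Conversely `∅` is accepted by the one-state rejecting DFA, which has no
observable states at all. -/

namespace DFA

variable {α σ : Type} (M : DFA α σ)

theorem accepts_eq_zero_of_not_obsState_start (h : ¬ ObsState M M.start) : M.accepts = 0 := by
  ext w
  exact iff_of_false (fun hw => h ⟨w, hw⟩) id

theorem not_semiObsState_of_forall_obsState (hobs : ∀ q, ObsState M q) (q : σ) :
    ¬ SemiObsState M q :=
  fun ⟨_, _, ha⟩ => ha (hobs _)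

theorem obsState_evalFrom_of_forall_not_semiObsState (hno : ∀ q, ¬ SemiObsState M q)
    {q : σ} (hq : ObsState M q) (w : List α) : ObsState M (M.evalFrom q w) := by
  induction w generalizing q with
  | nil => exact hq
  | cons a w ih => exact ih (not_not.mp fun ha => hno q ⟨hq, a, ha⟩)

theorem forall_obsState_of_forall_not_semiObsState (hacc : Accessible M)
    (hno : ∀ q, ¬ SemiObsState M q) (hstart : ObsState M M.start) (q : σ) : ObsState M q := by
  obtain ⟨w, rfl⟩ := hacc q
  exact M.obsState_evalFrom_of_forall_not_semiObsState hno hstart w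

theorem ncard_semiObsState_eq_zero_iff [Finite σ] :
    {q | SemiObsState M q}.ncard = 0 ↔ ∀ q, ¬ SemiObsState M q := by
  rw [Set.ncard_eq_zero, Set.eq_empty_iff_forall_notMem]
  rfl

def rejectAll (α : Type) : DFA α Unit :=
  ⟨fun _ _ => (), (), ∅⟩

theorem accessible_rejectAll : Accessible (rejectAll α) :=
  fun _ => ⟨[], rfl⟩

theorem accepts_rejectAll : (rejectAll α).accepts = 0 :=
  accepts_eq_zero_of_not_obsState_start _ fun ⟨_, hw⟩ => hw

theorem not_semiObsState_rejectAll (q : Unit) : ¬ SemiObsState (rejectAll α) q :=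
  fun ⟨⟨_, hw⟩, _⟩ => hw

end DFA

theorem T0_eq_O_union_empty_general {α : Type} (L : Language α) :
    InT α 0 L ↔ AcceptsObservably α L ∨ L = (0 : Language α) := by
  constructor
  · rintro ⟨σ, hσ, M, hacc, rfl, hcard⟩
    have hno := M.ncard_semiObsState_eq_zero_iff.mp (Nat.le_zero.mp hcard)
    by_cases hstart : ObsState M M.start
    · exact Or.inl
        ⟨σ, hσ, M, hacc, M.forall_obsState_of_forall_not_semiObsState hacc hno hstart, rfl⟩
    · exact Or.inr (M.accepts_eq_zero_of_not_obsState_start hstart)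
  · rintro (⟨σ, hσ, M, hacc, hobs, rfl⟩ | rfl)
    · exact ⟨σ, hσ, M, hacc, rfl,
        (M.ncard_semiObsState_eq_zero_iff.mpr (M.not_semiObsState_of_forall_obsState hobs)).le⟩
    · refine ⟨Unit, inferInstance, DFA.rejectAll α, DFA.accessible_rejectAll,
        DFA.accepts_rejectAll, ?_⟩
      exact ((DFA.rejectAll α).ncard_semiObsState_eq_zero_iff.mpr
        DFA.not_semiObsState_rejectAll).le

/-- `T₀ = O ∪ {∅}`. -/
theorem T0_eq_O_union_empty {α : Type} [Fintype α] (L : Language α) :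
    InT α 0 L ↔ AcceptsObservably α L ∨ L = (0 : Language α) :=
  T0_eq_O_union_empty_general L
end

section
/- The hierarchy is strict: for every k ≥ 0, T_k is a proper subset of T_{k+1}. -/
/-!
Inclusion `T_k ⊆ T_{k+1}` is immediate. For strictness, a state reached by a word `u` is
observable iff `u` is a prefix of a word of the language. With no semi-observable states the
observable states are closed under transitions, so in `T₀` every prefix extends by every letter;
hence `{ε}` over a one-letter alphabet lies in `T₁ \ T₀`. Over an alphabet with `m ≥ 2` letters,
the language of constant words is accepted with the `m` semi-observable states "read only `i`",
and in any DFA for it the states reached by the single letters are pairwise distinct and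
semi-observable, so it lies in `T_m \ T_{m-1}`.
-/

variable {α : Type}

section Observability

variable {σ : Type} {M : DFA α σ} {L : Language α}

theorem obsState_eval_iff (hM : M.accepts = L) (u : List α) :
    ObsState M (M.eval u) ↔ ∃ v, u ++ v ∈ L := by
  simp only [ObsState, ← hM, DFA.mem_accepts, DFA.eval, DFA.evalFrom_of_append]

theorem append_mem_iff_of_eval_eq (hM : M.accepts = L) {u u' : List α}
    (h : M.eval u = M.eval u') (v : List α) : u ++ v ∈ L ↔ u' ++ v ∈ L := by
  have heval (x : List α) : M.eval (x ++ v) = M.evalFrom (M.eval x) v :=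
    M.evalFrom_of_append _ x v
  rw [← hM, DFA.mem_accepts, DFA.mem_accepts, heval, heval, h]

end Observability

theorem InT.exists_append_cons_mem_of_zero {L : Language α} (hL : InT α 0 L) {u : List α}
    (hu : ∃ v, u ++ v ∈ L) (a : α) : ∃ v, u ++ a :: v ∈ L := by
  obtain ⟨σ, _, M, -, hM, hsemi⟩ := hL
  have hempty : {q | SemiObsState M q} = ∅ :=
    (Set.ncard_eq_zero (Set.toFinite _)).mp (Nat.le_zero.mp hsemi)
  have hstep : ObsState M (M.step (M.eval u) a) := by
    by_contra hdead
    exact hempty.subset ⟨(obsState_eval_iff hM u).mpr hu, a, hdead⟩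
  simpa [← DFA.eval_append_singleton, obsState_eval_iff hM] using hstep

section EmptyWord

theorem not_inT_zero_nil [Nonempty α] : ¬ InT α 0 {[]} := fun h => by
  obtain ⟨v, hv⟩ :=
    h.exists_append_cons_mem_of_zero ⟨[], List.append_nil _⟩ (Classical.arbitrary α)
  exact List.cons_ne_nil _ _ hv

def nilDFA (α : Type) : DFA α Bool where
  step _ _ := false
  start := true
  accept := {true}

@[simp]
theorem nilDFA_step (q : Bool) (a : α) : (nilDFA α).step q a = false := rfl

theorem nilDFA_evalFrom_false (w : List α) : (nilDFA α).evalFrom false w = false := by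
  induction w <;> simp_all

theorem nilDFA_accepts : (nilDFA α).accepts = {[]} := by
  ext (_ | ⟨a, w⟩)
  · exact iff_of_true rfl rfl
  · rw [DFA.mem_accepts, DFA.eval, DFA.evalFrom_cons, nilDFA_step, nilDFA_evalFrom_false]
    exact iff_of_false Bool.false_ne_true (List.cons_ne_nil _ _)

theorem not_obsState_nilDFA_false : ¬ ObsState (nilDFA α) false := fun ⟨w, hw⟩ =>
  Bool.false_ne_true ((nilDFA_evalFrom_false w).symm.trans hw)

theorem inT_one_nil [Nonempty α] : InT α 1 {[]} := by
  refine ⟨Bool, inferInstance, nilDFA α, ?_, nilDFA_accepts, ?_⟩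
  · rintro (_ | _)
    exacts [⟨[Classical.arbitrary α], rfl⟩, ⟨[], rfl⟩]
  · have hsemi : {q | SemiObsState (nilDFA α) q} ⊆ {true} := by
      rintro (_ | _) ⟨hobs, -⟩
      exacts [absurd hobs not_obsState_nilDFA_false, rfl]
    exact (Set.ncard_le_ncard hsemi).trans (Set.ncard_singleton _).le

end EmptyWord

section ConstWords

def constWords (α : Type) : Language α := {w | ∀ a ∈ w, ∀ b ∈ w, a = b}

theorem cons_mem_constWords_iff {a : α} {w : List α} :
    a :: w ∈ constWords α ↔ ∀ b ∈ w, b = a := by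
  refine ⟨fun h b hb => h b (List.mem_cons_of_mem a hb) a List.mem_cons_self, fun h => ?_⟩
  have hall : ∀ c ∈ a :: w, c = a := List.forall_mem_cons.mpr ⟨rfl, h⟩
  exact fun c hc d hd => (hall c hc).trans (hall d hd).symm

/-- Each first letter `i` needs its own semi-observable state `M.eval [i]`: reading `i` twice is
accepted and reading another letter after it is fatal. -/
theorem card_le_of_inT_constWords [Finite α] [Nontrivial α] {k : ℕ}
    (h : InT α k (constWords α)) : Nat.card α ≤ k := by
  obtain ⟨σ, _, M, -, hM, hk⟩ := h
  have hsemi (i : α) : SemiObsState M (M.eval [i]) := by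
    refine ⟨(obsState_eval_iff hM _).mpr ⟨[], cons_mem_constWords_iff.mpr (by simp)⟩, ?_⟩
    obtain ⟨j, hji⟩ := exists_ne i
    refine ⟨j, fun hobs => hji ?_⟩
    rw [← DFA.eval_append_singleton, obsState_eval_iff hM] at hobs
    obtain ⟨v, hv⟩ := hobs
    exact cons_mem_constWords_iff.mp hv j (by simp)
  have hinj : Function.Injective fun i : α => M.eval [i] := fun i j hij => by
    have hji : [j] ++ [i] ∈ constWords α :=
      (append_mem_iff_of_eval_eq hM hij [i]).mp (cons_mem_constWords_iff.mpr (by simp))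
    exact cons_mem_constWords_iff.mp hji i (by simp)
  calc Nat.card α = (Set.univ : Set α).ncard := (Set.ncard_univ α).symm
    _ ≤ {q | SemiObsState M q}.ncard :=
      Set.ncard_le_ncard_of_injOn _ (fun i _ => hsemi i) hinj.injOn
    _ ≤ k := hk

def constWordsDFA (α : Type) [DecidableEq α] : DFA α (Option (Option α)) where
  step
    | some none, a => some (some a)
    | some (some i), a => if a = i then some (some i) else none
    | none, _ => none
  start := some none
  accept := {q | q ≠ none}

variable [DecidableEq α]

@[simp]
theorem constWordsDFA_step_start (a : α) :
    (constWordsDFA α).step (some none) a = some (some a) := rfl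

@[simp]
theorem constWordsDFA_step_letter (i a : α) :
    (constWordsDFA α).step (some (some i)) a = if a = i then some (some i) else none := rfl

@[simp]
theorem constWordsDFA_step_none (a : α) : (constWordsDFA α).step none a = none := rfl

theorem constWordsDFA_evalFrom_none (w : List α) : (constWordsDFA α).evalFrom none w = none := by
  induction w <;> simp_all

theorem constWordsDFA_evalFrom_letter (i : α) (w : List α) :
    (constWordsDFA α).evalFrom (some (some i)) w
      = if ∀ a ∈ w, a = i then some (some i) else none := by
  induction w with
  | nil => simp
  | cons a w ih =>
    by_cases h : a = i
    · simp [h, ih]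
    · simp [h, constWordsDFA_evalFrom_none]

theorem constWordsDFA_accepts : (constWordsDFA α).accepts = constWords α := by
  ext (_ | ⟨a, w⟩)
  · exact iff_of_true (Option.some_ne_none _) fun a ha => absurd ha List.not_mem_nil
  · rw [cons_mem_constWords_iff, DFA.mem_accepts, DFA.eval, DFA.evalFrom_cons,
      show (constWordsDFA α).start = some none from rfl, constWordsDFA_step_start,
      constWordsDFA_evalFrom_letter]
    split_ifs with h
    · exact iff_of_true (Option.some_ne_none _) h
    · exact iff_of_false (fun hne => hne rfl) h

theorem obsState_constWordsDFA_iff {q : Option (Option α)} :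
    ObsState (constWordsDFA α) q ↔ q ≠ none := by
  refine ⟨fun ⟨w, hw⟩ hq => ?_, fun hq => ⟨[], hq⟩⟩
  subst hq
  rw [constWordsDFA_evalFrom_none] at hw
  exact hw rfl

theorem setOf_semiObsState_constWordsDFA_subset :
    {q | SemiObsState (constWordsDFA α) q} ⊆ Set.range fun i : α => some (some i) := by
  rintro (_ | _ | i) ⟨hobs, a, hdead⟩
  · exact absurd rfl (obsState_constWordsDFA_iff.mp hobs)
  · exact (hdead (obsState_constWordsDFA_iff.mpr (Option.some_ne_none _))).elim
  · exact ⟨i, rfl⟩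

theorem inT_constWords [Fintype α] [Nontrivial α] : InT α (Nat.card α) (constWords α) := by
  refine ⟨_, inferInstance, constWordsDFA α, ?_, constWordsDFA_accepts, ?_⟩
  · rintro (_ | _ | i)
    · obtain ⟨i, j, hij⟩ := exists_pair_ne α
      refine ⟨[i, j], ?_⟩
      change (constWordsDFA α).step (some (some i)) j = none
      simp [hij.symm]
    · exact ⟨[], rfl⟩
    · exact ⟨[i], rfl⟩
  · calc _ ≤ (Set.range fun i : α => (some (some i) : Option (Option α))).ncard :=
          Set.ncard_le_ncard setOf_semiObsState_constWordsDFA_subset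
      _ = Nat.card α := Set.ncard_range_of_injective fun i j h => by simpa using h

end ConstWords

/-- The hierarchy `T₀ ⊂ T₁ ⊂ T₂ ⊂ …` is strict: `T_k ⊆ T_{k+1}` over every alphabet,
and for each `k` some regular language lies in `T_{k+1}` but not in `T_k`. -/
theorem T_hierarchy_strict (k : ℕ) :
    (∀ (α : Type) (_ : Fintype α) (L : Language α), InT α k L → InT α (k + 1) L) ∧
    (∃ (α : Type) (_ : Fintype α) (L : Language α), InT α (k + 1) L ∧ ¬ InT α k L) := by
  refine ⟨fun α _ L ⟨σ, hσ, M, hacc, hM, hk⟩ => ⟨σ, hσ, M, hacc, hM, hk.trans k.le_succ⟩, ?_⟩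
  cases k with
  | zero => exact ⟨Unit, inferInstance, {[]}, inT_one_nil, not_inT_zero_nil⟩
  | succ n =>
    refine ⟨Fin (n + 2), inferInstance, constWords _, ?_, fun h => ?_⟩
    · simpa using inT_constWords (α := Fin (n + 2))
    · simpa using card_le_of_inT_constWords h
end

section
/- The minimum number of semi-observable states over all DFAs accepting a regular language L is attained by the minimal DFA for L; consequently, the least k with L ∈ T_k is computable from the minimal DFA. -/
/-- The Nerode setoid on the states of a DFA. -/
def nerodeSetoid {α σ : Type} (M : DFA α σ) : Setoid σ where
  r a b := ∀ w, M.evalFrom a w ∈ M.accept ↔ M.evalFrom b w ∈ M.accept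
  iseqv := ⟨fun _ _ => Iff.rfl, fun h w => (h w).symm, fun h1 h2 w => (h1 w).trans (h2 w)⟩

/-- The Nerode quotient of a DFA. -/
def quotDFA {α σ : Type} (M : DFA α σ) : DFA α (Quotient (nerodeSetoid M)) where
  step x a := Quotient.liftOn' x
    (fun q => (Quotient.mk'' (M.step q a) : Quotient (nerodeSetoid M)))
    (fun p1 p2 hp => Quotient.sound' (fun w => hp (a :: w)))
  start := Quotient.mk'' M.start
  accept := {x | ∃ q ∈ M.accept, Quotient.mk'' q = x}

/-- A state-minimal accessible DFA distinguishes any two Nerode-equivalent states. -/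
theorem minimal_distinguishes {α σ : Type} [Fintype σ] (M : DFA α σ)
    (hacc : Accessible M)
    (hmin : ∀ (σ' : Type) (_ : Fintype σ') (M' : DFA α σ'),
      Accessible M' → M'.accepts = M.accepts → Fintype.card σ ≤ Fintype.card σ')
    (q1 q2 : σ) (h : ∀ w, M.evalFrom q1 w ∈ M.accept ↔ M.evalFrom q2 w ∈ M.accept) :
    q1 = q2 := by
  classical
  let s := nerodeSetoid M
  let Mq := quotDFA M
  have hev : ∀ (w : List α) (q : σ), Mq.evalFrom (Quotient.mk'' q) w
      = Quotient.mk'' (M.evalFrom q w) := by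
    intro w
    induction w with
    | nil => intro q; rfl
    | cons a w ih => intro q; exact ih (M.step q a)
  have hmem : ∀ q : σ, (Quotient.mk'' q ∈ Mq.accept) ↔ q ∈ M.accept := by
    intro q
    constructor
    · rintro ⟨p, hp, he⟩
      exact (Quotient.exact' he []).mp hp
    · intro hq
      exact ⟨q, hq, rfl⟩
  haveI : Fintype (Quotient s) := Fintype.ofFinite _
  have haccQ : Accessible Mq := by
    intro y
    induction y using Quotient.inductionOn' with
    | h q =>
      obtain ⟨w, hw⟩ := hacc q
      refine ⟨w, ?_⟩
      rw [show Mq.eval w = Quotient.mk'' (M.evalFrom M.start w) from hev w M.start]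
      exact congrArg _ hw
  have haccepts : Mq.accepts = M.accepts := by
    ext x
    rw [DFA.mem_accepts, DFA.mem_accepts, DFA.eval, DFA.eval,
      show Mq.start = Quotient.mk'' M.start from rfl, hev]
    exact hmem _
  have hle : Fintype.card σ ≤ Fintype.card (Quotient s) := hmin _ _ Mq haccQ haccepts
  have hsurj : Function.Surjective (Quotient.mk'' : σ → Quotient s) :=
    Quotient.mk''_surjective
  have hbij : Function.Bijective (Quotient.mk'' : σ → Quotient s) :=
    (Fintype.bijective_iff_surjective_and_card _).mpr
      ⟨hsurj, le_antisymm hle (Fintype.card_le_of_surjective _ hsurj)⟩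
  exact hbij.injective (Quotient.sound' h)

/-- The minimal DFA for `L` attains the minimum number of semi-observable states:
if `M` is an accessible DFA for `L` with the fewest states, then its number of
semi-observable states is least among all accessible DFAs for `L`; hence
`L ∈ T_k` iff `so(M) ≤ k`. -/
theorem minimal_dfa_attains_so {α : Type} [Fintype α] (L : Language α)
    (σ : Type) [Fintype σ] (M : DFA α σ)
    (hacc : Accessible M) (haccepts : M.accepts = L)
    (hmin : ∀ (σ' : Type) (_ : Fintype σ') (M' : DFA α σ'),
      Accessible M' → M'.accepts = L → Fintype.card σ ≤ Fintype.card σ') :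
    (∀ (σ' : Type) (_ : Fintype σ') (M' : DFA α σ'),
        Accessible M' → M'.accepts = L →
        {q : σ | SemiObsState M q}.ncard ≤ {q : σ' | SemiObsState M' q}.ncard) ∧
    (∀ k : ℕ, InT α k L ↔ {q : σ | SemiObsState M q}.ncard ≤ k) := by
  classical
  have hdist := minimal_distinguishes M hacc (by
    intro σ' i M' h1 h2
    exact hmin σ' i M' h1 (h2.trans haccepts))
  have main : ∀ (σ' : Type) (_ : Fintype σ') (M' : DFA α σ'),
      Accessible M' → M'.accepts = L →
      {q : σ | SemiObsState M q}.ncard ≤ {q : σ' | SemiObsState M' q}.ncard := by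
    intro σ' i M' hacc' haccepts'
    -- a word leading to each state of M
    choose wrd hwrd using hacc
    -- residual translation
    have key : ∀ (q : σ) (u : List α),
        M.evalFrom q u ∈ M.accept ↔ M'.evalFrom (M'.eval (wrd q)) u ∈ M'.accept := by
      intro q u
      have h1 : M.evalFrom q u ∈ M.accept ↔ (wrd q ++ u) ∈ L := by
        have e : M.evalFrom M.start (wrd q) = q := hwrd q
        rw [← haccepts, DFA.mem_accepts, DFA.eval, DFA.evalFrom_of_append, e]
      have h2 : M'.evalFrom (M'.eval (wrd q)) u ∈ M'.accept ↔ (wrd q ++ u) ∈ L := by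
        rw [← haccepts', DFA.mem_accepts, DFA.eval, DFA.evalFrom_of_append]
      rw [h1, h2]
    set f : σ → σ' := fun q => M'.eval (wrd q) with hf
    have hmaps : ∀ q ∈ {q : σ | SemiObsState M q}, f q ∈ {q : σ' | SemiObsState M' q} := by
      rintro q ⟨⟨u, hu⟩, a, ha⟩
      refine ⟨⟨u, (key q u).mp hu⟩, a, ?_⟩
      rintro ⟨v, hv⟩
      exact ha ⟨v, (key q (a :: v)).mpr hv⟩
    have hinj : Set.InjOn f {q : σ | SemiObsState M q} := by
      intro q _ p _ hqp
      refine hdist q p fun u => ?_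
      rw [key q u, key p u, show M'.eval (wrd q) = M'.eval (wrd p) from hqp]
    exact Set.ncard_le_ncard_of_injOn f hmaps hinj (Set.toFinite _)
  refine ⟨main, fun k => ⟨?_, ?_⟩⟩
  · rintro ⟨σ', i, M', h1, h2, h3⟩
    exact le_trans (main σ' i M' h1 h2) h3
  · intro h
    exact ⟨σ, inferInstance, M, hacc, haccepts, h⟩
end

section
/- T₁ is not closed under union: the languages L₁ = (a+b)a* and L₂ = (a+b)b* over {a,b} both belong to T₁, but L₁ ∪ L₂ belongs to T₂ − T₁. -/
open Computability

/-- `L₁ = (a+b)a*` over `{a,b}` (with `a = 0`, `b = 1`). -/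
def L14a : Language (Fin 2) :=
  {w : List (Fin 2) | ∃ (x : Fin 2) (n : ℕ), w = x :: List.replicate n 0}

/-- `L₂ = (a+b)b*` over `{a,b}`. -/
def L14b : Language (Fin 2) :=
  {w : List (Fin 2) | ∃ (x : Fin 2) (n : ℕ), w = x :: List.replicate n 1}

def Ma (c : Fin 2) : DFA (Fin 2) (Fin 3) :=
  ⟨fun q d => if q = 0 then 1 else if q = 1 then (if d = c then 1 else 2) else 2, 0, {1}⟩

lemma Ma_dead (c : Fin 2) : ∀ w, (Ma c).evalFrom 2 w = 2 := by
  intro w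
  induction w with
  | nil => rfl
  | cons d t ih =>
    have : (Ma c).step 2 d = 2 := by simp [Ma]
    simpa [DFA.evalFrom, this] using ih

lemma Ma_good (c : Fin 2) : ∀ w, (Ma c).evalFrom 1 w = if ∀ d ∈ w, d = c then 1 else 2 := by
  intro w
  induction w with
  | nil => simp [DFA.evalFrom]
  | cons d t ih =>
    by_cases h : d = c
    · have hs : (Ma c).step 1 d = 1 := by simp [Ma, h]
      have : (Ma c).evalFrom 1 (d :: t) = (Ma c).evalFrom 1 t := by
        simp [DFA.evalFrom, hs]
      rw [this, ih]; simp [h]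
    · have hs : (Ma c).step 1 d = 2 := by simp [Ma, h]
      have : (Ma c).evalFrom 1 (d :: t) = (Ma c).evalFrom 2 t := by
        simp [DFA.evalFrom, hs]
      rw [this, Ma_dead]; simp [h]

lemma Ma_accepts (c : Fin 2) :
    (Ma c).accepts = {w : List (Fin 2) | ∃ (x : Fin 2) (n : ℕ), w = x :: List.replicate n c} := by
  ext w
  rw [DFA.mem_accepts]
  cases w with
  | nil =>
    constructor
    · intro h
      have : (Ma c).eval ([] : List (Fin 2)) = 0 := rfl
      rw [this] at h
      simp [Ma] at h
    · rintro ⟨x, n, h⟩; simp at h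
  | cons x t =>
    have hstep : (Ma c).step 0 x = 1 := by simp [Ma]
    have heval : (Ma c).eval (x :: t) = (Ma c).evalFrom 1 t := by
      show (Ma c).evalFrom ((Ma c).step 0 x) t = _
      rw [hstep]
    rw [heval, Ma_good]
    constructor
    · intro h
      by_cases hc : ∀ d ∈ t, d = c
      · exact ⟨x, t.length, by rw [List.eq_replicate_of_mem hc]; simp⟩
      · simp [hc, Ma] at h
    · rintro ⟨y, n, h⟩
      have := h
      injection this with h1 h2
      have : ∀ d ∈ t, d = c := by
        intro d hd; rw [h2] at hd; exact List.eq_of_mem_replicate hd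
      rw [if_pos this]; simp [Ma]

lemma Ma_obs1 (c : Fin 2) : ObsState (Ma c) 1 := ⟨[], by simp [DFA.evalFrom, Ma]⟩

lemma Ma_semiobs (c : Fin 2) : {q : Fin 3 | SemiObsState (Ma c) q} ⊆ {1} := by
  intro q hq
  obtain ⟨⟨w, hw⟩, a, ha⟩ := hq
  have hq3 : q = 0 ∨ q = 1 ∨ q = 2 := by omega
  rcases hq3 with h | h | h
  · exfalso; apply ha
    subst h
    have : (Ma c).step 0 a = 1 := by simp [Ma]
    rw [this]; exact Ma_obs1 c
  · exact h
  · exfalso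
    subst h
    rw [Ma_dead] at hw
    simp [Ma] at hw

lemma Ma_accessible (c : Fin 2) : Accessible (Ma c) := by
  intro s
  have hs3 : s = 0 ∨ s = 1 ∨ s = 2 := by omega
  rcases hs3 with h | h | h <;> subst h
  · exact ⟨[], rfl⟩
  · exact ⟨[0], rfl⟩
  · refine ⟨[0, c + 1], ?_⟩
    fin_cases c <;> decide

def Mu : DFA (Fin 2) (Fin 5) :=
  ⟨fun q d =>
    if q = 0 then 1
    else if q = 1 then (if d = 0 then 2 else 3)
    else if q = 2 then (if d = 0 then 2 else 4)
    else if q = 3 then (if d = 1 then 3 else 4)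
    else 4, 0, {1, 2, 3}⟩

lemma Mu_dead : ∀ w, Mu.evalFrom 4 w = 4 := by
  intro w
  induction w with
  | nil => rfl
  | cons d t ih =>
    have : Mu.step 4 d = 4 := by simp [Mu]
    simpa [DFA.evalFrom, this] using ih

lemma Mu_mode0 : ∀ w, Mu.evalFrom 2 w = if ∀ d ∈ w, d = 0 then 2 else 4 := by
  intro w
  induction w with
  | nil => simp [DFA.evalFrom]
  | cons d t ih =>
    by_cases h : d = (0 : Fin 2)
    · have hs : Mu.step 2 d = 2 := by simp [Mu, h]
      have : Mu.evalFrom 2 (d :: t) = Mu.evalFrom 2 t := by simp [DFA.evalFrom, hs]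
      rw [this, ih]; simp [h]
    · have hs : Mu.step 2 d = 4 := by simp [Mu, h]
      have : Mu.evalFrom 2 (d :: t) = Mu.evalFrom 4 t := by simp [DFA.evalFrom, hs]
      rw [this, Mu_dead]; simp [h]

lemma Mu_mode1 : ∀ w, Mu.evalFrom 3 w = if ∀ d ∈ w, d = 1 then 3 else 4 := by
  intro w
  induction w with
  | nil => simp [DFA.evalFrom]
  | cons d t ih =>
    by_cases h : d = (1 : Fin 2)
    · have hs : Mu.step 3 d = 3 := by simp [Mu, h]
      have : Mu.evalFrom 3 (d :: t) = Mu.evalFrom 3 t := by simp [DFA.evalFrom, hs]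
      rw [this, ih]; simp [h]
    · have hs : Mu.step 3 d = 4 := by simp [Mu, h]
      have : Mu.evalFrom 3 (d :: t) = Mu.evalFrom 4 t := by simp [DFA.evalFrom, hs]
      rw [this, Mu_dead]; simp [h]

lemma Mu_accepts : Mu.accepts = L14a + L14b := by
  ext w
  rw [DFA.mem_accepts, Language.mem_add]
  cases w with
  | nil =>
    constructor
    · intro h
      have : Mu.eval ([] : List (Fin 2)) = 0 := rfl
      rw [this] at h; simp [Mu] at h
    · rintro (⟨x, n, h⟩ | ⟨x, n, h⟩) <;> simp [L14a, L14b] at h <;> simp_all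
  | cons x t =>
    have heval : Mu.eval (x :: t) = Mu.evalFrom 1 t := by
      show Mu.evalFrom (Mu.step 0 x) t = _
      have : Mu.step 0 x = 1 := by simp [Mu]
      rw [this]
    rw [heval]
    cases t with
    | nil =>
      constructor
      · intro _; left; exact ⟨x, 0, rfl⟩
      · intro _; simp [DFA.evalFrom, Mu]
    | cons c t =>
      have key : ∀ c t, (Mu.evalFrom 1 (c :: t) ∈ Mu.accept) ↔ ∀ d ∈ t, d = c := by
        intro c t
        by_cases h0 : c = (0 : Fin 2)
        · subst h0
          have hs : Mu.step 1 (0 : Fin 2) = 2 := by simp [Mu]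
          have h2 : Mu.evalFrom 1 ((0 : Fin 2) :: t) = Mu.evalFrom 2 t := by
            simp [DFA.evalFrom, hs]
          rw [h2, Mu_mode0]
          constructor
          · intro h
            by_contra hc
            rw [if_neg hc] at h
            simp [Mu] at h
          · intro hc
            rw [if_pos hc]
            simp [Mu]
        · have h1 : c = 1 := by omega
          subst h1
          have hs : Mu.step 1 (1 : Fin 2) = 3 := by simp [Mu]
          have h2 : Mu.evalFrom 1 ((1 : Fin 2) :: t) = Mu.evalFrom 3 t := by
            simp [DFA.evalFrom, hs]
          rw [h2, Mu_mode1]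
          constructor
          · intro h
            by_contra hc
            rw [if_neg hc] at h
            simp [Mu] at h
          · intro hc
            rw [if_pos hc]
            simp [Mu]
      rw [key]
      constructor
      · intro hc
        have : c :: t = c :: List.replicate t.length c := by
          rw [List.eq_replicate_of_mem hc]; simp
        by_cases h0 : c = (0 : Fin 2)
        · subst h0
          left; exact ⟨x, t.length + 1, by rw [this]; simp [List.replicate_succ]⟩
        · have h1 : c = 1 := by omega
          subst h1
          right; exact ⟨x, t.length + 1, by rw [this]; simp [List.replicate_succ]⟩
      · rintro (⟨y, n, h⟩ | ⟨y, n, h⟩) <;>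
        · injection h with h1 h2
          cases n with
          | zero => simp [List.replicate] at h2
          | succ m =>
            rw [List.replicate_succ] at h2
            injection h2 with hc ht
            subst hc
            intro d hd; rw [ht] at hd; exact List.eq_of_mem_replicate hd

lemma Mu_semiobs : {q : Fin 5 | SemiObsState Mu q} ⊆ {2, 3} := by
  intro q hq
  obtain ⟨⟨w, hw⟩, a, ha⟩ := hq
  have hq5 : q = 0 ∨ q = 1 ∨ q = 2 ∨ q = 3 ∨ q = 4 := by omega
  have obs1 : ObsState Mu 1 := ⟨[], by simp [DFA.evalFrom, Mu]⟩
  have obs2 : ObsState Mu 2 := ⟨[], by simp [DFA.evalFrom, Mu]⟩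
  have obs3 : ObsState Mu 3 := ⟨[], by simp [DFA.evalFrom, Mu]⟩
  rcases hq5 with h | h | h | h | h
  · exfalso; apply ha; subst h
    have : Mu.step 0 a = 1 := by simp [Mu]
    rw [this]; exact obs1
  · exfalso; apply ha; subst h
    by_cases h0 : a = 0
    · have : Mu.step 1 a = 2 := by simp [Mu, h0]
      rw [this]; exact obs2
    · have : Mu.step 1 a = 3 := by fin_cases a <;> simp_all [Mu]
      rw [this]; exact obs3
  · subst h; left; rfl
  · subst h; right; rfl
  · exfalso; subst h
    rw [Mu_dead] at hw
    simp [Mu] at hw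

lemma Mu_accessible : ∀ q : Fin 5, ∃ w : List (Fin 2), Mu.eval w = q := by
  intro q
  have hq5 : q = 0 ∨ q = 1 ∨ q = 2 ∨ q = 3 ∨ q = 4 := by omega
  rcases hq5 with h | h | h | h | h <;> subst h
  · exact ⟨[], rfl⟩
  · exact ⟨[0], rfl⟩
  · exact ⟨[0, 0], rfl⟩
  · exact ⟨[0, 1], rfl⟩
  · exact ⟨[0, 0, 1], rfl⟩

/-- `T₁` is not closed under union: `(a+b)a*` and `(a+b)b*` lie in `T₁` but their
union (`+` on `Language` is union) lies in `T₂ − T₁`. -/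
theorem T1_not_closed_union :
    InT (Fin 2) 1 L14a ∧ InT (Fin 2) 1 L14b ∧
      InT (Fin 2) 2 (L14a + L14b) ∧ ¬ InT (Fin 2) 1 (L14a + L14b) := by
  refine ⟨?_, ?_, ?_, ?_⟩
  · exact ⟨Fin 3, inferInstance, Ma 0, Ma_accessible 0, Ma_accepts 0,
      le_trans (Set.ncard_le_ncard (Ma_semiobs 0) (Set.finite_singleton 1))
        (le_of_eq (Set.ncard_singleton 1))⟩
  · exact ⟨Fin 3, inferInstance, Ma 1, Ma_accessible 1, Ma_accepts 1,
      le_trans (Set.ncard_le_ncard (Ma_semiobs 1) (Set.finite_singleton 1))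
        (le_of_eq (Set.ncard_singleton 1))⟩
  · refine ⟨Fin 5, inferInstance, Mu, Mu_accessible, Mu_accepts, ?_⟩
    have h23 : ({2, 3} : Set (Fin 5)).ncard = 2 := Set.ncard_pair (by decide)
    calc {q : Fin 5 | SemiObsState Mu q}.ncard
        ≤ ({2, 3} : Set (Fin 5)).ncard :=
          Set.ncard_le_ncard Mu_semiobs (Set.toFinite _)
      _ = 2 := h23
  · rintro ⟨σ, fσ, M, hacc, hL, hcard⟩
    haveI := fσ
    have mem : ∀ w : List (Fin 2), M.eval w ∈ M.accept ↔ w ∈ L14a + L14b := by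
      intro w; rw [← DFA.mem_accepts, hL]
    have notin0 : ∀ w : List (Fin 2), ([0, 0, 1] ++ w) ∉ L14a + L14b := by
      intro w hmem
      rcases hmem with ⟨y, n, h⟩ | ⟨y, n, h⟩
      · injection h with h1 h2
        have : (1 : Fin 2) = 0 :=
          List.eq_of_mem_replicate (show (1 : Fin 2) ∈ List.replicate n 0 by rw [← h2]; simp)
        exact absurd this (by decide)
      · injection h with h1 h2
        have : (0 : Fin 2) = 1 :=
          List.eq_of_mem_replicate (show (0 : Fin 2) ∈ List.replicate n 1 by rw [← h2]; simp)
        exact absurd this (by decide)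
    have notin1 : ∀ w : List (Fin 2), ([1, 1, 0] ++ w) ∉ L14a + L14b := by
      intro w hmem
      rcases hmem with ⟨y, n, h⟩ | ⟨y, n, h⟩
      · injection h with h1 h2
        have : (1 : Fin 2) = 0 :=
          List.eq_of_mem_replicate (show (1 : Fin 2) ∈ List.replicate n 0 by rw [← h2]; simp)
        exact absurd this (by decide)
      · injection h with h1 h2
        have : (0 : Fin 2) = 1 :=
          List.eq_of_mem_replicate (show (0 : Fin 2) ∈ List.replicate n 1 by rw [← h2]; simp)
        exact absurd this (by decide)
    set p := M.eval [0, 0] with hp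
    set q := M.eval [1, 1] with hq
    have hpobs : ObsState M p :=
      ⟨[], (mem [0, 0]).2 (Or.inl ⟨0, 1, rfl⟩)⟩
    have hqobs : ObsState M q :=
      ⟨[], (mem [1, 1]).2 (Or.inr ⟨1, 1, rfl⟩)⟩
    have hps : ∀ w, M.evalFrom (M.step p 1) w = M.eval ([0, 0, 1] ++ w) := by
      intro w
      have : M.step p 1 = M.eval [0, 0, 1] := rfl
      rw [this]
      exact (DFA.evalFrom_of_append M M.start [0, 0, 1] w).symm
    have hqs : ∀ w, M.evalFrom (M.step q 0) w = M.eval ([1, 1, 0] ++ w) := by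
      intro w
      have : M.step q 0 = M.eval [1, 1, 0] := rfl
      rw [this]
      exact (DFA.evalFrom_of_append M M.start [1, 1, 0] w).symm
    have hpnot : ¬ ObsState M (M.step p 1) := by
      rintro ⟨w, hw⟩
      rw [hps w] at hw
      exact notin0 w ((mem _).1 hw)
    have hqnot : ¬ ObsState M (M.step q 0) := by
      rintro ⟨w, hw⟩
      rw [hqs w] at hw
      exact notin1 w ((mem _).1 hw)
    have hq1obs : ObsState M (M.step q 1) := by
      refine ⟨[], ?_⟩
      have : M.step q 1 = M.eval [1, 1, 1] := rfl
      show M.step q 1 ∈ M.accept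
      rw [this]
      exact (mem [1, 1, 1]).2 (Or.inr ⟨1, 2, rfl⟩)
    have hne : p ≠ q := by
      intro h
      rw [h] at hpnot
      exact hpnot hq1obs
    have hsub : ({p, q} : Set σ) ⊆ {s : σ | SemiObsState M s} := by
      rintro s (rfl | rfl)
      · exact ⟨hpobs, 1, hpnot⟩
      · exact ⟨hqobs, 0, hqnot⟩
    have h2 : ({p, q} : Set σ).ncard = 2 := Set.ncard_pair hne
    have := le_trans (Set.ncard_le_ncard hsub (Set.toFinite _)) hcard
    rw [h2] at this
    omega
end

section
/- T₁ is closed under Kleene plus: if a regular language L is accepted by some DFA with at most one semi-observable state, then L⁺ is also accepted by some DFA with at most one semi-observable state. -/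
open Computability

/-!
Determinize the automaton for `L⁺` that runs a DFA `M` for `L` and may restart after reaching an
accepting state, keeping in each subset only the observable states of `M`. A reachable subset is
then observable iff it is nonempty, and it is semi-observable with a letter `a` iff every element
dies on `a`, so it is a nonempty subset of the semi-observable states of `M`. When `M` has at most
one semi-observable state this pins the subset down, and restricting to the reachable subsets
gives an accessible DFA for `L⁺` with at most one semi-observable state.
-/

lemma Language.exists_append_singleton_mem_of_mem_kstar {α : Type} {l : Language α}
    {w : List α} {a : α} (h : w ++ [a] ∈ l∗) :
    ∃ u v, w = u ++ v ∧ u ∈ l∗ ∧ v ++ [a] ∈ l := by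
  obtain ⟨S, hS, hl⟩ := Language.mem_kstar_iff_exists_nonempty.mp h
  induction S using List.reverseRecOn with
  | nil => simp at hS
  | append_singleton S y _ =>
    obtain ⟨hy, hy_ne⟩ := hl y (by simp)
    obtain ⟨v, b, rfl⟩ := (List.eq_nil_or_concat' y).resolve_left hy_ne
    simp only [List.flatten_append, List.flatten_singleton, ← List.append_assoc] at hS
    obtain ⟨rfl, hb⟩ := List.append_inj' hS rfl
    cases List.singleton_injective hb
    exact ⟨S.flatten, v, rfl, Language.join_mem_kstar fun z hz => (hl z (by simp [hz])).1, hy⟩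

section Observability

variable {α σ : Type} {M : DFA α σ}

lemma ObsState.of_evalFrom {q : σ} {v : List α} (h : ObsState M (M.evalFrom q v)) :
    ObsState M q := by
  obtain ⟨w, hw⟩ := h
  exact ⟨v ++ w, by rwa [DFA.evalFrom_of_append]⟩

lemma ObsState.of_step {q : σ} {a : α} (h : ObsState M (M.step q a)) : ObsState M q :=
  h.of_evalFrom (v := [a])

lemma ObsState.of_mem_accept {q : σ} (h : q ∈ M.accept) : ObsState M q :=
  ⟨[], h⟩

end Observability

namespace DFA

variable {α σ : Type} (M : DFA α σ)

def reachable : DFA α (Set.range M.eval) where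
  step s a := ⟨M.step s a, by
    obtain ⟨w, hw⟩ := s.2
    exact ⟨w ++ [a], by rw [eval_append_singleton, hw]⟩⟩
  start := ⟨M.start, [], rfl⟩
  accept := Subtype.val ⁻¹' M.accept

@[simp]
lemma reachable_evalFrom_coe (s : Set.range M.eval) (w : List α) :
    (M.reachable.evalFrom s w : σ) = M.evalFrom s w := by
  induction w generalizing s with
  | nil => rfl
  | cons a w ih => exact ih _

lemma accessible_reachable : Accessible M.reachable := by
  rintro ⟨_, w, rfl⟩
  exact ⟨w, Subtype.ext (M.reachable_evalFrom_coe _ w)⟩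

lemma reachable_accepts : M.reachable.accepts = M.accepts := by
  ext w
  exact Iff.of_eq (congrArg (· ∈ M.accept) (M.reachable_evalFrom_coe _ w))

lemma obsState_reachable_iff {s : Set.range M.eval} : ObsState M.reachable s ↔ ObsState M s := by
  simp only [ObsState]
  exact exists_congr fun w => Iff.of_eq (congrArg (· ∈ M.accept) (M.reachable_evalFrom_coe s w))

lemma semiObsState_reachable_iff {s : Set.range M.eval} :
    SemiObsState M.reachable s ↔ SemiObsState M s := by
  simp only [SemiObsState, obsState_reachable_iff]
  rfl

end DFA

lemma inT_accepts_of_ncard_le {α σ : Type} [Finite σ] {k : ℕ} (M : DFA α σ)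
    (h : ({q | SemiObsState M q} ∩ Set.range M.eval).ncard ≤ k) : InT α k M.accepts := by
  refine ⟨_, Fintype.ofFinite _, M.reachable, M.accessible_reachable, M.reachable_accepts, ?_⟩
  have : {s | SemiObsState M.reachable s} = Subtype.val ⁻¹' {q | SemiObsState M q} := by
    ext s
    exact M.semiObsState_reachable_iff
  rwa [this, ← Set.ncard_image_of_injective _ Subtype.val_injective,
    Set.image_preimage_eq_inter_range, Subtype.range_coe]

section KleenePlus

variable {α σ : Type} (M : DFA α σ)

def plusNFA : NFA α σ where
  step p a := {r | ObsState M r ∧ (r = M.step p a ∨ M.step p a ∈ M.accept ∧ r = M.start)}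
  start := {r | ObsState M r ∧ r = M.start}
  accept := M.accept

lemma ObsState.of_mem_plusNFA_step {p r : σ} {a : α} (h : r ∈ (plusNFA M).step p a) :
    ObsState M p := by
  obtain ⟨hr, rfl | ⟨hacc, -⟩⟩ := h
  · exact hr.of_step
  · exact (ObsState.of_mem_accept hacc).of_step

lemma mem_plusNFA_eval {w : List α} {q : σ} :
    q ∈ (plusNFA M).eval w ↔
      ObsState M q ∧ ∃ u v, w = u ++ v ∧ u ∈ M.accepts∗ ∧ M.eval v = q := by
  induction w using List.reverseRecOn generalizing q with
  | nil =>
    simp only [NFA.eval_nil, plusNFA, Set.mem_ofPred_eq, List.nil_eq_append_iff]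
    constructor
    · rintro ⟨hq, rfl⟩
      exact ⟨hq, [], [], ⟨rfl, rfl⟩, Language.nil_mem_kstar _, rfl⟩
    · rintro ⟨hq, _, _, ⟨rfl, rfl⟩, -, rfl⟩
      exact ⟨hq, rfl⟩
  | append_singleton w a ih =>
    rw [NFA.eval_append_singleton, NFA.mem_stepSet]
    constructor
    · rintro ⟨t, ht, hq, hstep⟩
      obtain ⟨-, u, v, rfl, hu, rfl⟩ := ih.mp ht
      refine ⟨hq, ?_⟩
      rcases hstep with rfl | ⟨hacc, rfl⟩
      · exact ⟨u, v ++ [a], by simp, hu, M.eval_append_singleton v a⟩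
      · have hva : v ++ [a] ∈ M.accepts := by rwa [DFA.mem_accepts, DFA.eval_append_singleton]
        have huva : u ++ (v ++ [a]) ∈ M.accepts∗ :=
          (kstar_mul_le_kstar : M.accepts∗ * M.accepts ≤ M.accepts∗)
            (Language.append_mem_mul hu hva)
        exact ⟨u ++ (v ++ [a]), [], by simp, huva, rfl⟩
    · rintro ⟨hq, u, v, huv, hu, rfl⟩
      rcases List.eq_nil_or_concat' v with rfl | ⟨v, b, rfl⟩
      · rw [List.append_nil] at huv
        subst huv
        obtain ⟨u', v, rfl, hu', hv⟩ := Language.exists_append_singleton_mem_of_mem_kstar hu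
        have hacc : M.step (M.eval v) a ∈ M.accept := by rwa [← DFA.eval_append_singleton]
        have hv_obs : ObsState M (M.eval v) := (ObsState.of_mem_accept hacc).of_step
        exact ⟨M.eval v, ih.mpr ⟨hv_obs, u', v, rfl, hu', rfl⟩, hq, Or.inr ⟨hacc, rfl⟩⟩
      · rw [← List.append_assoc] at huv
        obtain ⟨rfl, hb⟩ := List.append_inj' huv rfl
        cases List.singleton_injective hb
        rw [DFA.eval_append_singleton] at hq ⊢
        exact ⟨M.eval v, ih.mpr ⟨hq.of_step, u, v, rfl, hu, rfl⟩, hq, Or.inl rfl⟩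

lemma plusNFA_accepts : (plusNFA M).accepts = M.accepts * M.accepts∗ := by
  rw [← Language.mul_self_kstar_comm]
  ext w
  constructor
  · rintro ⟨q, hq, hw⟩
    obtain ⟨-, u, v, rfl, hu, rfl⟩ := (mem_plusNFA_eval M).mp hw
    exact Language.append_mem_mul hu hq
  · rw [Language.mem_mul]
    rintro ⟨u, hu, v, hv, rfl⟩
    exact ⟨M.eval v, hv,
      (mem_plusNFA_eval M).mpr ⟨ObsState.of_mem_accept hv, u, v, rfl, hu, rfl⟩⟩

lemma evalFrom_mem_plusNFA_evalFrom {S : Set σ} {q : σ} (hq : q ∈ S) {w : List α}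
    (hw : ObsState M (M.evalFrom q w)) : M.evalFrom q w ∈ (plusNFA M).evalFrom S w := by
  induction w generalizing q S with
  | nil => exact hq
  | cons a w ih =>
    rw [DFA.evalFrom_cons] at hw ⊢
    exact ih (NFA.mem_stepSet.mpr ⟨q, hq, hw.of_evalFrom, Or.inl rfl⟩) hw

lemma obsState_toDFA_plusNFA_iff {S : Set σ} :
    ObsState (plusNFA M).toDFA S ↔ ∃ q ∈ S, ObsState M q := by
  constructor
  · rintro ⟨w, q, hw, hq⟩
    rcases w with _ | ⟨a, w⟩
    · exact ⟨q, hw, ObsState.of_mem_accept hq⟩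
    · change q ∈ (plusNFA M).evalFrom ((plusNFA M).stepSet S a) w at hw
      obtain ⟨t, ht, -⟩ := NFA.mem_evalFrom_iff_exists.mp hw
      obtain ⟨p, hp, hpt⟩ := NFA.mem_stepSet.mp ht
      exact ⟨p, hp, ObsState.of_mem_plusNFA_step M hpt⟩
  · rintro ⟨q, hq, w, hw⟩
    exact ⟨w, _, evalFrom_mem_plusNFA_evalFrom M hq (ObsState.of_mem_accept hw), hw⟩

lemma subset_semiObsState_of_semiObsState_toDFA_plusNFA {S : Set σ}
    (hS : ∀ q ∈ S, ObsState M q) (h : SemiObsState (plusNFA M).toDFA S) :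
    S.Nonempty ∧ S ⊆ {q | SemiObsState M q} := by
  obtain ⟨hobs, a, hna⟩ := h
  rw [obsState_toDFA_plusNFA_iff] at hobs hna
  obtain ⟨q, hq, -⟩ := hobs
  exact ⟨⟨q, hq⟩, fun p hp =>
    ⟨hS p hp, a, fun hpa => hna ⟨_, NFA.mem_stepSet.mpr ⟨p, hp, hpa, Or.inl rfl⟩, hpa⟩⟩⟩

end KleenePlus

theorem T1_closed_kleene_plus_general {α : Type} (L : Language α)
    (h : InT α 1 L) : InT α 1 (L * L∗) := by
  obtain ⟨σ, _, M, -, rfl, hM⟩ := h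
  rw [← plusNFA_accepts, ← NFA.toDFA_correct]
  apply inT_accepts_of_ncard_le
  rw [Set.ncard_le_one_iff_subsingleton]
  suffices ∀ S ∈ {S | SemiObsState (plusNFA M).toDFA S} ∩
      Set.range (plusNFA M).toDFA.eval, S = {q | SemiObsState M q} from
    fun S hS T hT => (this S hS).trans (this T hT).symm
  rintro S ⟨hsemi, w, rfl⟩
  obtain ⟨hne, hsub⟩ := subset_semiObsState_of_semiObsState_toDFA_plusNFA M
    (fun q hq => ((mem_plusNFA_eval M).mp hq).1) hsemi
  exact Set.eq_of_subset_of_ncard_le hsub (hM.trans ((Set.ncard_pos).mpr hne))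

/-- `T₁` is closed under Kleene plus. -/
theorem T1_closed_kleene_plus {α : Type} [Fintype α] (L : Language α)
    (h : InT α 1 L) : InT α 1 (L * L∗) :=
  T1_closed_kleene_plus_general L h
end

section
/- T₂ is not closed under Kleene plus: there exists a regular language L over {a,b} accepted by a DFA with at most 2 semi-observable states such that L⁺ is not accepted by any DFA with at most 2 semi-observable states. -/
open Computability

/-! Every state of a DFA for `L` determines the left quotient of `L` by the words leading to it,
so distinct nonempty left quotients with an empty one-letter quotient force distinct
semi-observable states. For `L₀ = bb(a + bbb)*` the quotients of `L₀⁺` by `ε`, `b`, `bbb` are of this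
kind: every word of `L₀⁺` starts with `bb`, one starting with `bbb` continues with `b`, and the suffixes
`b`, `b`, `bb` separate the three quotients. `L₀` itself has a DFA with only two semi-observable
states. -/

namespace Language

variable {α : Type}

def semiObsQuotients (L : Language α) : Set (Language α) :=
  {K | K ∈ Set.range L.leftQuotient ∧ K ≠ 0 ∧ ∃ a, K.leftQuotient [a] = 0}

theorem leftQuotient_mem_semiObsQuotients {L : Language α} {u w : List α} (a : α)
    (hw : u ++ w ∈ L) (hdead : ∀ v, u ++ a :: v ∉ L) : L.leftQuotient u ∈ L.semiObsQuotients := by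
  refine ⟨⟨u, rfl⟩, fun h => notMem_zero w (h ▸ hw), a, ?_⟩
  rw [← leftQuotient_append]
  exact Set.eq_empty_of_forall_notMem fun v hv =>
    hdead v (by rw [← List.singleton_append, ← List.append_assoc]; exact hv)

theorem leftQuotient_ne_of_mem_of_notMem {L : Language α} {u v w : List α}
    (hu : u ++ w ∈ L) (hv : v ++ w ∉ L) : L.leftQuotient u ≠ L.leftQuotient v :=
  fun h => hv (by rw [← mem_leftQuotient, ← h]; exact hu)

theorem prefix_of_mem_mul {l m : Language α} {p w : List α} (hl : ∀ x ∈ l, p <+: x)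
    (hw : w ∈ l * m) : p <+: w := by
  obtain ⟨x, hx, y, -, rfl⟩ := mem_mul.1 hw
  exact (hl x hx).trans (List.prefix_append x y)

theorem prefix_of_mem_kstar {l : Language α} {p w : List α} (hl : ∀ x ∈ l, p <+: x)
    (hw : w ∈ l∗) (hne : w ≠ []) : p <+: w := by
  obtain ⟨_ | ⟨x, S⟩, rfl, hS⟩ := mem_kstar.1 hw
  · exact absurd rfl hne
  · exact (hl x (hS x List.mem_cons_self)).trans (List.prefix_append x S.flatten)

end Language

namespace DFA

variable {α σ : Type} (M : DFA α σ)

theorem obsState_iff_acceptsFrom_ne_zero (q : σ) : ObsState M q ↔ M.acceptsFrom q ≠ 0 := by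
  refine ⟨fun ⟨w, hw⟩ h => Language.notMem_zero w (h ▸ hw), fun h => ?_⟩
  by_contra hobs
  exact h (Set.eq_empty_of_forall_notMem fun w hw => hobs ⟨w, hw⟩)

theorem semiObsQuotients_accepts_subset :
    M.accepts.semiObsQuotients ⊆ M.acceptsFrom '' {q | SemiObsState M q} := by
  rintro _ ⟨⟨u, rfl⟩, hobs, a, hdead⟩
  rw [Language.leftQuotient_accepts_apply] at hobs hdead ⊢
  exact ⟨M.eval u, ⟨(M.obsState_iff_acceptsFrom_ne_zero _).2 hobs, a,
    fun h => (M.obsState_iff_acceptsFrom_ne_zero _).1 h hdead⟩, rfl⟩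

end DFA

theorem not_inT_of_subset_semiObsQuotients {α : Type} {k : ℕ} {L : Language α}
    {T : Set (Language α)} (hT : T ⊆ L.semiObsQuotients) (hk : k < T.ncard) : ¬ InT α k L := by
  rintro ⟨σ, _, M, -, rfl, hM⟩
  have hT_le : T.ncard ≤ {q | SemiObsState M q}.ncard :=
    (Set.ncard_le_ncard (hT.trans M.semiObsQuotients_accepts_subset)).trans Set.ncard_image_le
  omega

/-- A DFA for `L₀ = bb(a + bbb)*`, writing `a = 0` and `b = 1`; state `3` is the dead state. -/
def M₀ : DFA (Fin 2) (Fin 4) where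
  step q a := ![![3, 1], ![3, 2], ![2, 0], ![3, 3]] q a
  start := 0
  accept := {q | q = 2}

abbrev L₀ : Language (Fin 2) := M₀.accepts

theorem mem_accept_M₀ {q : Fin 4} : q ∈ M₀.accept ↔ q = 2 :=
  Iff.rfl

theorem M₀_evalFrom_three (w : List (Fin 2)) : M₀.evalFrom 3 w = 3 := by
  induction w with
  | nil => rfl
  | cons a w ih => fin_cases a <;> exact ih

theorem M₀_accessible : Accessible M₀ := by
  intro q
  fin_cases q
  exacts [⟨[], rfl⟩, ⟨[1], rfl⟩, ⟨[1, 1], rfl⟩, ⟨[0], rfl⟩]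

theorem obsState_M₀_iff (q : Fin 4) : ObsState M₀ q ↔ q ≠ 3 := by
  refine ⟨?_, fun hq => ?_⟩
  · rintro ⟨w, hw⟩ rfl
    rw [M₀_evalFrom_three, mem_accept_M₀] at hw
    exact absurd hw (by decide)
  · fin_cases q
    exacts [⟨[1, 1], rfl⟩, ⟨[1], rfl⟩, ⟨[], rfl⟩, absurd rfl hq]

theorem setOf_semiObsState_M₀ : {q | SemiObsState M₀ q} = {0, 1} := by
  ext q
  simp only [Set.mem_ofPred_eq, SemiObsState, obsState_M₀_iff, Set.mem_insert_iff,
    Set.mem_singleton_iff]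
  fin_cases q <;> decide

theorem L₀_inT_two : InT (Fin 2) 2 L₀ :=
  ⟨Fin 4, inferInstance, M₀, M₀_accessible, rfl, by
    rw [setOf_semiObsState_M₀, Set.ncard_pair (by decide)]⟩

theorem bb_prefix_of_mem_L₀ {w : List (Fin 2)} (hw : w ∈ L₀) : [1, 1] <+: w := by
  have dead (v : List (Fin 2)) : M₀.evalFrom 3 v ∉ M₀.accept := by
    rw [mem_accept_M₀, M₀_evalFrom_three]; decide
  match w, hw with
  | [], h | [1], h => exact absurd (mem_accept_M₀.1 h) (by decide)
  | 0 :: v, h | 1 :: 0 :: v, h => exact absurd h (dead v)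
  | 1 :: 1 :: v, _ => exact ⟨v, rfl⟩

theorem bbb_cons_mem_L₀_iff {v : List (Fin 2)} : 1 :: 1 :: 1 :: v ∈ L₀ ↔ v ∈ L₀ :=
  Iff.rfl

theorem one_prefix_of_bbb_cons_mem_L₀_plus {v : List (Fin 2)} (hv : 1 :: 1 :: 1 :: v ∈ L₀ * L₀∗) :
    [1] <+: v := by
  obtain ⟨x, hx, y, hy, hxy⟩ := Language.mem_mul.1 hv
  obtain ⟨x', rfl⟩ := bb_prefix_of_mem_L₀ hx
  have hx'y : x' ++ y = 1 :: v := by simpa using hxy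
  rcases x' with _ | ⟨c, x'⟩
  · rw [List.nil_append] at hx'y
    subst hx'y
    simpa using Language.prefix_of_mem_kstar (fun _ => bb_prefix_of_mem_L₀) hy
      (List.cons_ne_nil _ _)
  · obtain ⟨rfl, rfl⟩ := List.cons_eq_cons.1 hx'y
    have := bb_prefix_of_mem_L₀ (bbb_cons_mem_L₀_iff.1 hx)
    exact List.IsPrefix.trans (by decide) (this.trans (List.prefix_append _ _))

theorem bb_prefix_of_mem_L₀_plus {w : List (Fin 2)} (hw : w ∈ L₀ * L₀∗) : [1, 1] <+: w :=
  Language.prefix_of_mem_mul (fun _ => bb_prefix_of_mem_L₀) hw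

theorem mem_L₀_plus_of_mem_L₀ {w : List (Fin 2)} (hw : w ∈ L₀) : w ∈ L₀ * L₀∗ := by
  simpa using Language.append_mem_mul hw (Language.nil_mem_kstar L₀)

theorem bb_mem_L₀ : [1, 1] ∈ L₀ :=
  rfl

theorem bb_mem_L₀_plus : [1, 1] ∈ L₀ * L₀∗ :=
  mem_L₀_plus_of_mem_L₀ bb_mem_L₀

theorem bbbb_mem_L₀_plus : [1, 1, 1, 1] ∈ L₀ * L₀∗ :=
  Language.append_mem_mul bb_mem_L₀ (le_kstar (a := L₀) bb_mem_L₀)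

theorem bbbbb_mem_L₀_plus : [1, 1, 1, 1, 1] ∈ L₀ * L₀∗ :=
  mem_L₀_plus_of_mem_L₀ rfl

theorem b_notMem_L₀_plus : [1] ∉ L₀ * L₀∗ :=
  fun h => by simpa using bb_prefix_of_mem_L₀_plus h

theorem bbb_notMem_L₀_plus : [1, 1, 1] ∉ L₀ * L₀∗ :=
  fun h => by simpa using one_prefix_of_bbb_cons_mem_L₀_plus (v := []) h

theorem leftQuotients_L₀_plus_subset :
    {(L₀ * L₀∗).leftQuotient [], (L₀ * L₀∗).leftQuotient [1], (L₀ * L₀∗).leftQuotient [1, 1, 1]} ⊆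
      (L₀ * L₀∗).semiObsQuotients := by
  rintro _ (rfl | rfl | rfl)
  · exact Language.leftQuotient_mem_semiObsQuotients 0 bb_mem_L₀_plus
      fun v h => by simpa using bb_prefix_of_mem_L₀_plus h
  · exact Language.leftQuotient_mem_semiObsQuotients (w := [1]) 0 bb_mem_L₀_plus
      fun v h => by simpa using bb_prefix_of_mem_L₀_plus h
  · exact Language.leftQuotient_mem_semiObsQuotients (w := [1]) 0 bbbb_mem_L₀_plus
      fun v h => by simpa using one_prefix_of_bbb_cons_mem_L₀_plus h

theorem ncard_leftQuotients_L₀_plus :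
    ({(L₀ * L₀∗).leftQuotient [], (L₀ * L₀∗).leftQuotient [1],
      (L₀ * L₀∗).leftQuotient [1, 1, 1]} : Set (Language (Fin 2))).ncard = 3 :=
  Set.ncard_eq_three.2 ⟨_, _, _,
    (Language.leftQuotient_ne_of_mem_of_notMem (w := [1]) bb_mem_L₀_plus b_notMem_L₀_plus).symm,
    (Language.leftQuotient_ne_of_mem_of_notMem (w := [1]) bbbb_mem_L₀_plus b_notMem_L₀_plus).symm,
    (Language.leftQuotient_ne_of_mem_of_notMem (w := [1, 1]) bbbbb_mem_L₀_plus
      bbb_notMem_L₀_plus).symm, rfl⟩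

/-- `T₂` is not closed under Kleene plus. -/
theorem T2_not_closed_kleene_plus :
    ∃ L : Language (Fin 2), InT (Fin 2) 2 L ∧ ¬ InT (Fin 2) 2 (L * L∗) :=
  ⟨L₀, L₀_inT_two, not_inT_of_subset_semiObsQuotients leftQuotients_L₀_plus_subset
    (by rw [ncard_leftQuotients_L₀_plus]; norm_num)⟩
end
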